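/- Let I be a school matching instance, F⊆S(I) nonempty, and f:F→ℝ. If the problem Π(f,F) is minimum cut representable, then the set of minimizers {M∈F : f(M) ≤ f(M') for all M'∈F} is a (nonempty) sublattice of the lattice of stable matchings (S(I),≥), i.e., it is closed under the meet ∧ and join ∨ of (S(I),≥). -/

import Mathlib

open Classical
open scoped ENNReal

noncomputable section

namespace SM

/-- A school matching instance: students `A`, schools `B`, strict preference
orders over the other side plus the outside option `∅` (encoded as `none`),
and quotas `q b ≤ |A|`. -/
structure SchoolInstance (A B : Type) [Fintype A] [Fintype B] where
  prefA : A → Option B → Option B → Prop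
  prefB : B → Option A → Option A → Prop
  prefA_sto : ∀ a, IsStrictTotalOrder (Option B) (prefA a)
  prefB_sto : ∀ b, IsStrictTotalOrder (Option A) (prefB b)
  q : B → ℕ
  q_le : ∀ b, q b ≤ Fintype.card A

variable {A B : Type} [Fintype A] [Fintype B] [DecidableEq A] [DecidableEq B]

/-- A matching: every student is assigned a school or the outside option, and
each school receives at most `q b` students.  (A school is implicitly paired
with the outside option exactly when it has strictly fewer than `q b`
students, and a student is paired with the outside option exactly when it has
no school; this determines the set of pairs of the matching.) -/
structure Matching {A B : Type} [Fintype A] [Fintype B] (I : SchoolInstance A B) where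
  toFun : A → Option B
  quota : ∀ b : B, (Finset.univ.filter fun a => toFun a = some b).card ≤ I.q b

instance (I : SchoolInstance A B) : Nonempty (Matching I) := by
  refine ⟨⟨fun _ => none, fun b => ?_⟩⟩
  have h : (Finset.univ.filter fun _ : A => (none : Option B) = some b) = ∅ :=
    Finset.filter_false_of_mem (by intro a _; simp)
  rw [h, Finset.card_empty]
  exact Nat.zero_le _

/-- The students assigned to school `b`. -/
def assignedTo (I : SchoolInstance A B) (M : Matching I) (b : B) : Finset A :=
  Finset.univ.filter fun a => M.toFun a = some b

/-- School `b` has strictly fewer than `q b` students, i.e. is also paired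
with the outside option. -/
def hasSlack (I : SchoolInstance A B) (M : Matching I) (b : B) : Prop :=
  (assignedTo I M b).card < I.q b

/-- `x ∈ M(b)`: the partners of school `b` (students assigned to it, plus the
outside option when it is under quota). -/
def inPartners (I : SchoolInstance A B) (M : Matching I) (b : B) (x : Option A) : Prop :=
  (∃ a : A, x = some a ∧ M.toFun a = some b) ∨ (x = none ∧ hasSlack I M b)

/-- `M(b)` as a set. -/
def partnersSet (I : SchoolInstance A B) (M : Matching I) (b : B) : Set (Option A) :=
  {x | inPartners I M b x}

/-- The pair `ab` blocks `M`. -/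
def BlocksPair (I : SchoolInstance A B) (M : Matching I) (a : A) (b : B) : Prop :=
  I.prefA a (some b) (M.toFun a) ∧ ∃ x, inPartners I M b x ∧ I.prefB b (some a) x

/-- Student `a` blocks `M` (prefers the outside option to its partner). -/
def BlocksStudent (I : SchoolInstance A B) (M : Matching I) (a : A) : Prop :=
  I.prefA a none (M.toFun a)

/-- School `b` blocks `M` (prefers the outside option to one of its partners). -/
def BlocksSchool (I : SchoolInstance A B) (M : Matching I) (b : B) : Prop :=
  ∃ a : A, M.toFun a = some b ∧ I.prefB b none (some a)

/-- Stability: no blocking pair and no blocking agent. -/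
def Stable (I : SchoolInstance A B) (M : Matching I) : Prop :=
  (¬ ∃ a b, BlocksPair I M a b) ∧ (¬ ∃ a, BlocksStudent I M a) ∧ (¬ ∃ b, BlocksSchool I M b)

/-- `M ≥ M'`: every student weakly prefers `M` to `M'`. -/
def matGE (I : SchoolInstance A B) (M M' : Matching I) : Prop :=
  ∀ a : A, M.toFun a = M'.toFun a ∨ I.prefA a (M.toFun a) (M'.toFun a)

/-- `M' < M` in the student order. -/
def matLT (I : SchoolInstance A B) (M' M : Matching I) : Prop :=
  matGE I M M' ∧ M'.toFun ≠ M.toFun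

/-- `M'` is an immediate predecessor of `M` in `(S(I), ≥)`. -/
def ImmPred (I : SchoolInstance A B) (M' M : Matching I) : Prop :=
  Stable I M' ∧ Stable I M ∧ matLT I M' M ∧
    ¬ ∃ M'' : Matching I, Stable I M'' ∧ matLT I M' M'' ∧ matLT I M'' M

/-- The type in which rotations live: pairs `(ρ₊, ρ₋)` of sets of
student/school pairs (with the outside option allowed on either side). -/
abbrev Rot (A B : Type) : Type :=
  Finset (Option A × Option B) × Finset (Option A × Option B)

/-- The set of pairs of a matching: each student with its partner, and each
under-quota school with the outside option. -/
def pairsOf (I : SchoolInstance A B) (M : Matching I) : Finset (Option A × Option B) :=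
  Finset.univ.filter fun p =>
    (∃ a : A, p = (some a, M.toFun a)) ∨ (∃ b : B, hasSlack I M b ∧ p = (none, some b))

/-- The rotation `ρ(M, M') = (M ∖ M', M' ∖ M)`. -/
def rho (I : SchoolInstance A B) (M M' : Matching I) : Rot A B :=
  (pairsOf I M \ pairsOf I M', pairsOf I M' \ pairsOf I M)

/-- `R(I)`: the set of all rotations of `I`. -/
def RotSet (I : SchoolInstance A B) : Set (Rot A B) :=
  {r | ∃ M M' : Matching I, ImmPred I M' M ∧ r = rho I M M'}

/-- `c` is a maximal chain of stable matchings from `M0` down to `M`: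
consecutive entries are immediate predecessors. -/
def chainTo (I : SchoolInstance A B) (M0 M : Matching I) (c : List (Matching I)) : Prop :=
  c.head? = some M0 ∧ c.getLast? = some M ∧ (∀ N ∈ c, Stable I N) ∧
    List.Chain' (fun X Y => ImmPred I Y X) c

/-- The set of rotations eliminated along the chain `c`. -/
def chainRots (I : SchoolInstance A B) (c : List (Matching I)) : Set (Rot A B) :=
  {r | ∃ (i : ℕ) (X Y : Matching I), GetElem?.getElem? c i = some X ∧ GetElem?.getElem? c (i + 1) = some Y ∧ r = rho I X Y}

/-- `ρ` is exposed in `M`. -/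
def Exposed (I : SchoolInstance A B) (r : Rot A B) (M : Matching I) : Prop :=
  ∃ M', ImmPred I M' M ∧ r = rho I M M'

/-- The rotation poset `ρ ⊵ ρ'` (relative to the rotation-set map `RM`):
either `ρ = ρ'`, or `ρ ∈ R_M` for every stable `M` in which `ρ'` is exposed. -/
def domRel (I : SchoolInstance A B) (RM : Matching I → Set (Rot A B)) (r r' : Rot A B) : Prop :=
  r = r' ∨ ∀ M, Stable I M → Exposed I r' M → r ∈ RM M

/-- `ρ ▷ ρ'`. -/
def strictDom (I : SchoolInstance A B) (RM : Matching I → Set (Rot A B)) (r r' : Rot A B) : Prop :=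
  domRel I RM r r' ∧ r ≠ r'

/-- `R ⊆ R(I)` is upper-closed in the rotation poset. -/
def UpperClosed (I : SchoolInstance A B) (RM : Matching I → Set (Rot A B))
    (R : Set (Rot A B)) : Prop :=
  R ⊆ RotSet I ∧ ∀ r' ∈ R, ∀ r ∈ RotSet I, domRel I RM r r' → r ∈ R

/-- `N` is the join `M ∨ M'` (least upper bound) in `(S(I), ≥)`. -/
def IsJoin (I : SchoolInstance A B) (M M' N : Matching I) : Prop :=
  Stable I N ∧ matGE I N M ∧ matGE I N M' ∧
    ∀ P, Stable I P → matGE I P M → matGE I P M' → matGE I P N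

/-- `N` is the meet `M ∧ M'` (greatest lower bound) in `(S(I), ≥)`. -/
def IsMeet (I : SchoolInstance A B) (M M' N : Matching I) : Prop :=
  Stable I N ∧ matGE I M N ∧ matGE I M' N ∧
    ∀ P, Stable I P → matGE I M P → matGE I M' P → matGE I N P

/-- `F` is a (nonempty) sublattice of the lattice of stable matchings. -/
def IsSublattice (I : SchoolInstance A B) (F : Set (Matching I)) : Prop :=
  F.Nonempty ∧ (∀ M ∈ F, Stable I M) ∧
    (∀ M ∈ F, ∀ M' ∈ F, ∃ N ∈ F, IsJoin I M M' N) ∧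
    (∀ M ∈ F, ∀ M' ∈ F, ∃ N ∈ F, IsMeet I M M' N)

/-- `ρ ~ ρ'`: the two rotations are eliminated together in every matching of `F`. -/
def rotEquiv (I : SchoolInstance A B) (RM : Matching I → Set (Rot A B))
    (F : Set (Matching I)) (r r' : Rot A B) : Prop :=
  ∀ M ∈ F, (r ∈ RM M ↔ r' ∈ RM M)

/-- The trivial meta-rotation `θ₀^F` of rotations eliminated in every matching of `F`. -/
def theta0 (I : SchoolInstance A B) (RM : Matching I → Set (Rot A B))
    (F : Set (Matching I)) : Set (Rot A B) :=
  {r | r ∈ RotSet I ∧ ∀ M ∈ F, r ∈ RM M}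

/-- The trivial meta-rotation `θ_z^F` of rotations eliminated in no matching of `F`. -/
def thetaZ (I : SchoolInstance A B) (RM : Matching I → Set (Rot A B))
    (F : Set (Matching I)) : Set (Rot A B) :=
  {r | r ∈ RotSet I ∧ ∀ M ∈ F, r ∉ RM M}

/-- `θ` is a meta-rotation of `F` (an equivalence class of `~`). -/
def IsMetaRot (I : SchoolInstance A B) (RM : Matching I → Set (Rot A B))
    (F : Set (Matching I)) (θ : Set (Rot A B)) : Prop :=
  ∃ r ∈ RotSet I, θ = {r' | r' ∈ RotSet I ∧ rotEquiv I RM F r r'}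

/-- `θ` is a proper meta-rotation of `F`. -/
def IsProperMeta (I : SchoolInstance A B) (RM : Matching I → Set (Rot A B))
    (F : Set (Matching I)) (θ : Set (Rot A B)) : Prop :=
  IsMetaRot I RM F θ ∧ θ ≠ theta0 I RM F ∧ θ ≠ thetaZ I RM F

/-- `θ ⊵^F θ'` on (proper) meta-rotations. -/
def metaDom (I : SchoolInstance A B) (RM : Matching I → Set (Rot A B))
    (F : Set (Matching I)) (θ θ' : Set (Rot A B)) : Prop :=
  ∀ M ∈ F, θ' ⊆ RM M → θ ⊆ RM M

/-- `Θ_M`: the set of proper meta-rotations contained in `R_M`. -/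
def ThetaM (I : SchoolInstance A B) (RM : Matching I → Set (Rot A B))
    (F : Set (Matching I)) (M : Matching I) : Set (Set (Rot A B)) :=
  {θ | IsProperMeta I RM F θ ∧ θ ⊆ RM M}

/-- `Θ` is an upper-closed set of proper meta-rotations. -/
def UCProper (I : SchoolInstance A B) (RM : Matching I → Set (Rot A B))
    (F : Set (Matching I)) (Θ : Set (Set (Rot A B))) : Prop :=
  (∀ θ ∈ Θ, IsProperMeta I RM F θ) ∧
    ∀ θ' ∈ Θ, ∀ θ, IsProperMeta I RM F θ → metaDom I RM F θ θ' → θ ∈ Θ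

/-- `M_R`: the stable matching whose rotation set is `R` (via definite description). -/
def MofR (I : SchoolInstance A B) (RM : Matching I → Set (Rot A B))
    (R : Set (Rot A B)) : Matching I :=
  Classical.epsilon fun M => Stable I M ∧ RM M = R

/-- `R^θ = θ₀^F ∪ ⋃ {θ' proper : θ' ⊵^F θ}`. -/
def Rup (I : SchoolInstance A B) (RM : Matching I → Set (Rot A B))
    (F : Set (Matching I)) (θ : Set (Rot A B)) : Set (Rot A B) :=
  theta0 I RM F ∪ ⋃₀ {θ' | IsProperMeta I RM F θ' ∧ metaDom I RM F θ' θ}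

/-- `R_θ = θ₀^F ∪ ⋃ {θ' proper : θ' ▷^F θ}`. -/
def Rdn (I : SchoolInstance A B) (RM : Matching I → Set (Rot A B))
    (F : Set (Matching I)) (θ : Set (Rot A B)) : Set (Rot A B) :=
  theta0 I RM F ∪ ⋃₀ {θ' | IsProperMeta I RM F θ' ∧ metaDom I RM F θ' θ ∧ θ' ≠ θ}

/-- `M^θ`. -/
def Mup (I : SchoolInstance A B) (RM : Matching I → Set (Rot A B))
    (F : Set (Matching I)) (θ : Set (Rot A B)) : Matching I :=
  MofR I RM (Rup I RM F θ)

/-- `M_θ`. -/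
def Mdn (I : SchoolInstance A B) (RM : Matching I → Set (Rot A B))
    (F : Set (Matching I)) (θ : Set (Rot A B)) : Matching I :=
  MofR I RM (Rdn I RM F θ)

/-- The meet `M ∧ M'` in the lattice of stable matchings (via definite description). -/
def meetM (I : SchoolInstance A B) (M M' : Matching I) : Matching I :=
  Classical.epsilon fun N => IsMeet I M M' N

/-- First order differential `∂f_θ = f(M^θ) − f(M_θ)`. -/
def d1 (I : SchoolInstance A B) (RM : Matching I → Set (Rot A B))
    (F : Set (Matching I)) (f : Matching I → ℝ) (θ : Set (Rot A B)) : ℝ :=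
  f (Mup I RM F θ) - f (Mdn I RM F θ)

/-- Second order differential
`∂²f_{θ,θ'} = f(M^θ ∧ M_{θ'}) + f(M_θ ∧ M^{θ'}) − f(M_θ ∧ M_{θ'}) − f(M^θ ∧ M^{θ'})`. -/
def d2 (I : SchoolInstance A B) (RM : Matching I → Set (Rot A B))
    (F : Set (Matching I)) (f : Matching I → ℝ) (θ θ' : Set (Rot A B)) : ℝ :=
  f (meetM I (Mup I RM F θ) (Mdn I RM F θ')) + f (meetM I (Mdn I RM F θ) (Mup I RM F θ'))
    - f (meetM I (Mdn I RM F θ) (Mdn I RM F θ')) - f (meetM I (Mup I RM F θ) (Mup I RM F θ'))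

/-- The greatest element `M₀^F` of `F` (via definite description). -/
def topF (I : SchoolInstance A B) (F : Set (Matching I)) : Matching I :=
  Classical.epsilon fun N => N ∈ F ∧ ∀ P ∈ F, matGE I N P

/-- Vertices of the digraph: all rotations, plus a source `s` and sink `t`. -/
abbrev Vtx (A B : Type) : Type := Rot A B ⊕ Bool

/-- The source `s`. -/
def srcV : Vtx A B := Sum.inr true

/-- The sink `t`. -/
def tgtV : Vtx A B := Sum.inr false

/-- The value of the cut `S` for the capacity function `u`: the total capacity
of the arcs leaving `S`. -/
def cutVal (u : Vtx A B → Vtx A B → ℝ≥0∞) (S : Set (Vtx A B)) : ℝ≥0∞ :=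
  ∑ p : Vtx A B × Vtx A B, if p.1 ∈ S ∧ p.2 ∉ S then u p.1 p.2 else 0

/-- The `s`-`t` cut `{s} ∪ R`. -/
def cutOf (R : Set (Rot A B)) : Set (Vtx A B) := insert srcV (Sum.inl '' R)

/-- `(u, C)` witnesses minimum cut representability of `Π(f, F)`: for every
`R ⊆ R(I)`, the cut `{s} ∪ R` has finite capacity iff `R` is upper-closed and
`M_R ∈ F`, and in that case its value is `f(M_R) + C`. -/
def MinCutRepWith (I : SchoolInstance A B) (RM : Matching I → Set (Rot A B))
    (F : Set (Matching I)) (f : Matching I → ℝ)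
    (u : Vtx A B → Vtx A B → ℝ≥0∞) (C : ℝ) : Prop :=
  ∀ R : Set (Rot A B), R ⊆ RotSet I →
    ((cutVal u (cutOf R) ≠ ⊤ ↔
        (UpperClosed I RM R ∧ ∃ M, Stable I M ∧ RM M = R ∧ M ∈ F)) ∧
      (∀ M, Stable I M → RM M = R → M ∈ F → (cutVal u (cutOf R)).toReal = f M + C))

/-- The problem `Π(f, F)` is minimum cut representable. -/
def MinCutRep (I : SchoolInstance A B) (RM : Matching I → Set (Rot A B))
    (F : Set (Matching I)) (f : Matching I → ℝ) : Prop :=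
  ∃ u C, MinCutRepWith I RM F f u C

/-- The cut digraph `D^{f,F}` (with representative rotations `rep` and
constant `γ`); capacities of parallel arcs are added. -/
def cutDigraph (I : SchoolInstance A B) (RM : Matching I → Set (Rot A B))
    (F : Set (Matching I)) (f : Matching I → ℝ)
    (rep : Set (Rot A B) → Rot A B) (γ : ℝ) : Vtx A B → Vtx A B → ℝ≥0∞ :=
  fun x y =>
    (if ∃ θ, IsMetaRot I RM F θ ∧ ∃ r ∈ θ, ∃ r' ∈ θ, r ≠ r' ∧ x = Sum.inl r ∧ y = Sum.inl r'
      then ⊤ else 0)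
    + (if ∃ θ θ', IsProperMeta I RM F θ ∧ IsProperMeta I RM F θ' ∧ θ ≠ θ' ∧
          metaDom I RM F θ' θ ∧ x = Sum.inl (rep θ) ∧ y = Sum.inl (rep θ')
        then ⊤ else 0)
    + (∑ θ : Set (Rot A B), ∑ θ' : Set (Rot A B),
        if IsProperMeta I RM F θ ∧ IsProperMeta I RM F θ' ∧ θ ≠ θ' ∧
            x = Sum.inl (rep θ) ∧ y = Sum.inl (rep θ')
        then ENNReal.ofReal ((1 / 2) * d2 I RM F f θ θ') else 0)
    + (if (theta0 I RM F).Nonempty ∧ x = srcV ∧ y = Sum.inl (rep (theta0 I RM F))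
        then ⊤ else 0)
    + (if (thetaZ I RM F).Nonempty ∧ x = Sum.inl (rep (thetaZ I RM F)) ∧ y = tgtV
        then ⊤ else 0)
    + (∑ θ : Set (Rot A B),
        if IsProperMeta I RM F θ ∧ x = Sum.inl (rep θ) ∧ y = tgtV
        then ENNReal.ofReal (d1 I RM F f θ -
          (1 / 2) * (∑ θ' : Set (Rot A B),
            if IsProperMeta I RM F θ' ∧ θ' ≠ θ then d2 I RM F f θ θ' else 0) + γ)
        else 0)
    + (∑ θ : Set (Rot A B),
        if IsProperMeta I RM F θ ∧ x = srcV ∧ y = Sum.inl (rep θ)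
        then ENNReal.ofReal γ else 0)

/-- `b` prefers `S'` to `S''`: every member of `S'` is preferred to every
member of `S'' ∖ S'`. -/
def prefersSet (I : SchoolInstance A B) (b : B) (S' S'' : Set (Option A)) : Prop :=
  ∀ x ∈ S', ∀ y ∈ S'', y ∉ S' → I.prefB b x y

/-- `A(ρ)`: students appearing in `ρ₊`. -/
def Aof (r : Rot A B) : Set A := {a | ∃ b : B, (some a, some b) ∈ r.1}

/-- `B(ρ)`: schools appearing in `ρ₊`. -/
def Bof (r : Rot A B) : Set B := {b | ∃ a : A, (some a, some b) ∈ r.1}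

/-- `ρ₊(b)`: students matched to `b` in `ρ₊`. -/
def rhoPlusB (r : Rot A B) (b : B) : Set A := {a | (some a, some b) ∈ r.1}

/-- `R^ρ = {ρ' : ρ' ⊵ ρ}`. -/
def RupRot (I : SchoolInstance A B) (RM : Matching I → Set (Rot A B))
    (r : Rot A B) : Set (Rot A B) :=
  {r' | r' ∈ RotSet I ∧ domRel I RM r' r}

/-- `R_ρ = {ρ' : ρ' ▷ ρ}`. -/
def RdnRot (I : SchoolInstance A B) (RM : Matching I → Set (Rot A B))
    (r : Rot A B) : Set (Rot A B) :=
  {r' | r' ∈ RotSet I ∧ strictDom I RM r' r}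

/-- `M^ρ`. -/
def MupRot (I : SchoolInstance A B) (RM : Matching I → Set (Rot A B))
    (r : Rot A B) : Matching I :=
  MofR I RM (RupRot I RM r)

/-- `M_ρ`. -/
def MdnRot (I : SchoolInstance A B) (RM : Matching I → Set (Rot A B))
    (r : Rot A B) : Matching I :=
  MofR I RM (RdnRot I RM r)

/-- First order differential of `f` at a rotation: `∂f_ρ = f(M^ρ) − f(M_ρ)`. -/
def d1Rot (I : SchoolInstance A B) (RM : Matching I → Set (Rot A B))
    (f : Matching I → ℝ) (r : Rot A B) : ℝ :=
  f (MupRot I RM r) - f (MdnRot I RM r)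

/-- Second order differential of `f` at a pair of distinct rotations. -/
def d2Rot (I : SchoolInstance A B) (RM : Matching I → Set (Rot A B))
    (f : Matching I → ℝ) (r r' : Rot A B) : ℝ :=
  f (meetM I (MupRot I RM r) (MdnRot I RM r')) + f (meetM I (MdnRot I RM r) (MupRot I RM r'))
    - f (meetM I (MdnRot I RM r) (MdnRot I RM r'))
    - f (meetM I (MupRot I RM r) (MupRot I RM r'))

/-- The pair `(ρ_in, ρ_out)` characterizes the stable matchings assigning both
siblings `a, ā` to school `b`. -/
def siblingChar (I : SchoolInstance A B) (RM : Matching I → Set (Rot A B))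
    (a abar : A) (b : B) (p : Rot A B × Rot A B) : Prop :=
  ∀ M : Matching I, Stable I M →
    ((M.toFun a = some b ∧ M.toFun abar = some b) ↔ (p.1 ∈ RM M ∧ p.2 ∉ RM M))

/-- Some stable matching assigns both `a` and `ā` to `b`. -/
def goodSchool (I : SchoolInstance A B) (a abar : A) (b : B) : Prop :=
  ∃ M, Stable I M ∧ M.toFun a = some b ∧ M.toFun abar = some b

/-- The pair `(ρ_in(a,ā,b), ρ_out(a,ā,b))` (via definite description). -/
def siblingPair (I : SchoolInstance A B) (RM : Matching I → Set (Rot A B))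
    (a abar : A) (b : B) : Rot A B × Rot A B :=
  Classical.epsilon fun p => p.1 ∈ RotSet I ∧ p.2 ∈ RotSet I ∧
    siblingChar I RM a abar b p ∧ strictDom I RM p.1 p.2

/-- `R_in(a, ā)`. -/
def Rin (I : SchoolInstance A B) (RM : Matching I → Set (Rot A B))
    (a abar : A) : Set (Rot A B) :=
  {r | ∃ b, goodSchool I a abar b ∧ r = (siblingPair I RM a abar b).1}

/-- `R_out(a, ā)`. -/
def Rout (I : SchoolInstance A B) (RM : Matching I → Set (Rot A B))
    (a abar : A) : Set (Rot A B) :=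
  {r | ∃ b, goodSchool I a abar b ∧ r = (siblingPair I RM a abar b).2}

/-- The indicator function: `0` when the siblings are matched to the same
school, `1` otherwise. -/
def sibIndicator (I : SchoolInstance A B) (a abar : A) : Matching I → ℝ :=
  fun M => if M.toFun a = M.toFun abar then 0 else 1

end SM

/-!
Rotation sets reverse the order of stable matchings: `M' ≤ M` iff `R_M ⊆ R_M'`, because `R_M`
does not depend on the maximal chain from `M₀` to `M` used to compute it. Hence the meet and the
join of `M` and `M'` are the matchings with rotation sets `R_M ∪ R_M'` and `R_M ∩ R_M'`. The
value of an `s`–`t` cut is submodular in its source side, so for minimizers `M`, `M'` of `f` on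
`F` the cuts of `R_M ∪ R_M'` and `R_M ∩ R_M'` have finite total value at most
`val R_M + val R_M'`; by representability they come from matchings of `F` whose `f`-values add
up to at most `f M + f M' = 2 min f`, so both are minimizers.
-/

namespace List

theorem exists_infix_pair_of_head?_of_getLast? {α : Type*} {p : α → Prop} :
    ∀ {l : List α} {x y : α}, l.head? = some x → l.getLast? = some y → ¬ p x → p y →
      ∃ u v, [u, v] <:+: l ∧ ¬ p u ∧ p v
  | [], _, _, hx, _, _, _ => by simp at hx
  | [z], x, y, hx, hy, hpx, hpy => by
    simp only [head?_cons, Option.some.injEq, getLast?_singleton] at hx hy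
    subst hx hy
    exact absurd hpy hpx
  | z :: w :: t, x, y, hx, hy, hpx, hpy => by
    obtain rfl : z = x := by simpa using hx
    by_cases hpw : p w
    · exact ⟨z, w, (prefix_append [z, w] t).isInfix, hpx, hpw⟩
    · obtain ⟨u, v, huv, hpu, hpv⟩ :=
        exists_infix_pair_of_head?_of_getLast? (l := w :: t) rfl
          (by rwa [getLast?_cons_cons] at hy) hpw hpy
      exact ⟨u, v, huv.trans (suffix_cons z _).isInfix, hpu, hpv⟩

end List

namespace SM

variable {A B : Type}

theorem cutOf_union (R R' : Set (Rot A B)) : cutOf (R ∪ R') = cutOf R ∪ cutOf R' := by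
  rw [cutOf, Set.image_union, Set.insert_union_distrib]
  rfl

theorem cutOf_inter (R R' : Set (Rot A B)) : cutOf (R ∩ R') = cutOf R ∩ cutOf R' := by
  rw [cutOf, Set.image_inter Sum.inl_injective, Set.insert_inter_distrib]
  rfl

variable [Fintype A] [Fintype B] {I : SchoolInstance A B}

theorem Matching.toFun_injective : Function.Injective (Matching.toFun (I := I)) := by
  rintro ⟨f, _⟩ ⟨g, _⟩ rfl
  rfl

instance : Finite (Matching I) := Finite.of_injective _ Matching.toFun_injective

instance : PartialOrder (Matching I) where
  le M' M := matGE I M M'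
  le_refl _ _ := Or.inl rfl
  le_trans X Y Z hXY hYZ a := by
    rcases hXY a with h | h <;> rcases hYZ a with h' | h'
    · exact Or.inl (h'.trans h)
    · exact Or.inr (h ▸ h')
    · exact Or.inr (h' ▸ h)
    · exact Or.inr ((I.prefA_sto a).trans _ _ _ h' h)
  le_antisymm X Y hXY hYX := Matching.toFun_injective <| funext fun a => by
    rcases hYX a with h | h
    · exact h
    rcases hXY a with h' | h'
    · exact h'.symm
    · exact absurd ((I.prefA_sto a).trans _ _ _ h h') ((I.prefA_sto a).irrefl _)

theorem matLT_iff_lt {M M' : Matching I} : matLT I M' M ↔ M' < M := by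
  rw [matLT, lt_iff_le_and_ne, Matching.toFun_injective.ne_iff]
  rfl

section Stable

variable [DecidableEq B]

theorem immPred_iff {M M' : Matching I} : ImmPred I M' M ↔
    Stable I M' ∧ Stable I M ∧ M' < M ∧ ¬ ∃ N, Stable I N ∧ M' < N ∧ N < M := by
  simp only [ImmPred, matLT_iff_lt]

theorem exists_immPred_of_lt {M N : Matching I} (hM : Stable I M) (hN : Stable I N)
    (hNM : N < M) : ∃ Z, ImmPred I Z M ∧ N ≤ Z := by
  obtain ⟨Z, ⟨hZ, hNZ, hZM⟩, hmax⟩ :=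
    (Set.toFinite {P | Stable I P ∧ N ≤ P ∧ P < M}).exists_maximal ⟨N, hN, le_rfl, hNM⟩
  refine ⟨Z, immPred_iff.2 ⟨hZ, hM, hZM, ?_⟩, hNZ⟩
  rintro ⟨W, hW, hZW, hWM⟩
  exact hZW.not_ge (hmax ⟨hW, hNZ.trans hZW.le, hWM⟩ hZW.le)

theorem chainTo.immPred_of_infix {X Y P Q : Matching I} {c : List (Matching I)}
    (hc : chainTo I X Y c) (h : [P, Q] <:+: c) : ImmPred I Q P :=
  List.isChain_pair (R := fun P Q => ImmPred I Q P) |>.1 (hc.2.2.2.infix h)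

theorem chainTo.le_of_mem {X Y Z : Matching I} {c : List (Matching I)}
    (hc : chainTo I X Y c) (hZ : Z ∈ c) : Y ≤ Z := by
  obtain ⟨c', rfl⟩ := List.getLast?_eq_some_iff.1 hc.2.1
  have hdesc : (c' ++ [Y]).Pairwise (· ≥ ·) :=
    (hc.2.2.2.imp fun _ _ h => ((immPred_iff.1 h).2.2.1).le).pairwise
  rcases List.mem_append.1 hZ with hZ | hZ
  · exact (List.pairwise_append.1 hdesc).2.2 Z hZ Y (List.mem_singleton_self Y)
  · simp_all

theorem chainTo.snoc {X M Z : Matching I} {c : List (Matching I)}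
    (hc : chainTo I X M c) (hZ : ImmPred I Z M) : chainTo I X Z (c ++ [Z]) := by
  obtain ⟨hhead, hlast, hstable, hchain⟩ := hc
  refine ⟨?_, by simp, ?_, hchain.append (List.isChain_singleton Z) ?_⟩
  · obtain ⟨c', rfl⟩ := List.getLast?_eq_some_iff.1 hlast
    cases c' <;> simp_all
  · simpa [or_imp, forall_and] using ⟨hstable, hZ.1⟩
  · simp [hlast, hZ]

theorem chainTo.exists_append {X M N : Matching I} {c : List (Matching I)}
    (hc : chainTo I X M c) (hN : Stable I N) (hNM : N ≤ M) :
    ∃ t, chainTo I X N (c ++ t) := by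
  induction M using WellFoundedLT.induction generalizing c with
  | _ M ih =>
    rcases hNM.eq_or_lt with rfl | hlt
    · exact ⟨[], by simpa using hc⟩
    obtain ⟨Z, hZ, hNZ⟩ :=
      exists_immPred_of_lt (hc.2.2.1 M (List.mem_of_getLast? hc.2.1)) hN hlt
    obtain ⟨t, ht⟩ := ih Z (immPred_iff.1 hZ).2.2.1 (hc.snoc hZ) hNZ
    exact ⟨Z :: t, by simpa using ht⟩

end Stable

theorem mem_chainRots_iff [DecidableEq A] [DecidableEq B] {c : List (Matching I)}
    {r : Rot A B} : r ∈ chainRots I c ↔ ∃ X Y, [X, Y] <:+: c ∧ r = rho I X Y := by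
  simp only [chainRots, Set.mem_ofPred_eq, List.infix_iff_getElem?]
  constructor
  · rintro ⟨i, X, Y, hX, hY, rfl⟩
    refine ⟨X, Y, ⟨i, ?_, ?_⟩, rfl⟩
    · have := (List.getElem?_eq_some_iff.1 hY).1
      simp only [List.length_cons, List.length_nil]
      omega
    · rintro (_ | _ | j) hj
      · simpa using hX
      · simpa [Nat.add_comm 1 i] using hY
      · simp at hj
  · rintro ⟨X, Y, ⟨k, -, hk⟩, rfl⟩
    exact ⟨k, X, Y, by simpa using hk 0 (by simp),
      by simpa [Nat.add_comm 1 k] using hk 1 (by simp), rfl⟩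

theorem chainRots_subset_append [DecidableEq A] [DecidableEq B] (c t : List (Matching I)) :
    chainRots I c ⊆ chainRots I (c ++ t) := by
  simp only [Set.subset_def, mem_chainRots_iff]
  rintro r ⟨X, Y, hXY, rfl⟩
  exact ⟨X, Y, hXY.trans (List.prefix_append c t).isInfix, rfl⟩

theorem some_mem_pairsOf_iff [DecidableEq A] [DecidableEq B] {M : Matching I} {a : A}
    {x : Option B} : (some a, x) ∈ pairsOf I M ↔ x = M.toFun a := by
  simp [pairsOf]

theorem some_mem_rho_snd_iff [DecidableEq A] [DecidableEq B] {X Y : Matching I} {a : A}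
    {x : Option B} : (some a, x) ∈ (rho I X Y).2 ↔ x = Y.toFun a ∧ x ≠ X.toFun a := by
  rw [rho, Finset.mem_sdiff, some_mem_pairsOf_iff, some_mem_pairsOf_iff]

structure IsRotationSetMap [DecidableEq A] [DecidableEq B] (I : SchoolInstance A B)
    (M0 : Matching I) (RM : Matching I → Set (Rot A B)) : Prop where
  stable_top : Stable I M0
  le_top : ∀ N, Stable I N → N ≤ M0
  eq_chainRots : ∀ M c, Stable I M → chainTo I M0 M c → RM M = chainRots I c

namespace IsRotationSetMap

variable [DecidableEq A] [DecidableEq B] {M0 : Matching I} {RM : Matching I → Set (Rot A B)}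

theorem exists_chainTo (h : IsRotationSetMap I M0 RM) {M : Matching I} (hM : Stable I M) :
    ∃ c, chainTo I M0 M c :=
  have hM0 : chainTo I M0 M0 [M0] := ⟨rfl, rfl, by simpa using h.stable_top, .singleton M0⟩
  let ⟨_, hc⟩ := hM0.exists_append hM (h.le_top M hM)
  ⟨_, hc⟩

theorem antitone (h : IsRotationSetMap I M0 RM) {M N : Matching I} (hM : Stable I M)
    (hN : Stable I N) (hNM : N ≤ M) : RM M ⊆ RM N := by
  obtain ⟨c, hc⟩ := h.exists_chainTo hM
  obtain ⟨t, hct⟩ := hc.exists_append hN hNM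
  rw [h.eq_chainRots M c hM hc, h.eq_chainRots N _ hN hct]
  exact chainRots_subset_append c t

theorem subset_rotSet (h : IsRotationSetMap I M0 RM) {M : Matching I} (hM : Stable I M) :
    RM M ⊆ RotSet I := by
  obtain ⟨c, hc⟩ := h.exists_chainTo hM
  rw [h.eq_chainRots M c hM hc]
  intro r hr
  obtain ⟨X, Y, hXY, rfl⟩ := mem_chainRots_iff.1 hr
  exact ⟨X, Y, hc.immPred_of_infix hXY, rfl⟩

theorem upperClosed (h : IsRotationSetMap I M0 RM) {M : Matching I} (hM : Stable I M) :
    UpperClosed I RM (RM M) := by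
  refine ⟨h.subset_rotSet hM, fun r' hr' r _ hdom => ?_⟩
  rcases hdom with rfl | hdom
  · exact hr'
  obtain ⟨c, hc⟩ := h.exists_chainTo hM
  rw [h.eq_chainRots M c hM hc] at hr'
  obtain ⟨X, Y, hXY, rfl⟩ := mem_chainRots_iff.1 hr'
  have hXc : X ∈ c := hXY.subset (List.mem_cons_self ..)
  have hX : Stable I X := hc.2.2.1 X hXc
  exact h.antitone hX hM (hc.le_of_mem hXc) (hdom X hX ⟨Y, hc.immPred_of_infix hXY, rfl⟩)

theorem le_of_subset (h : IsRotationSetMap I M0 RM) {X Y : Matching I} (hX : Stable I X)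
    (hY : Stable I Y) (hXY : RM X ⊆ RM Y) : Y ≤ X := by
  obtain ⟨cX, hcX⟩ := h.exists_chainTo hX
  obtain ⟨cY, hcY⟩ := h.exists_chainTo hY
  intro a
  by_cases h0 : M0.toFun a = X.toFun a
  · exact h0 ▸ h.le_top Y hY a
  -- A step `P → Q` towards `X` at which `a` gets its final partner is a rotation of `X`,
  -- hence also a step `P' → Q'` towards `Y`; comparing `ρ₋` gives `X a = Q' a` and `Y ≤ Q'`.
  obtain ⟨P, Q, hPQ, hPa, hQa⟩ := List.exists_infix_pair_of_head?_of_getLast?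
    (p := fun P => P.toFun a = X.toFun a) hcX.1 hcX.2.1 h0 rfl
  have hrot : rho I P Q ∈ chainRots I cY := by
    rw [← h.eq_chainRots Y cY hY hcY]
    exact hXY (h.eq_chainRots X cX hX hcX ▸ mem_chainRots_iff.2 ⟨P, Q, hPQ, rfl⟩)
  obtain ⟨P', Q', hPQ', hrot'⟩ := mem_chainRots_iff.1 hrot
  have hXQ' : X.toFun a = Q'.toFun a := by
    have hmem := some_mem_rho_snd_iff.2 ⟨hQa.symm, fun h => hPa h.symm⟩
    exact (some_mem_rho_snd_iff.1 (hrot' ▸ hmem)).1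
  exact hXQ' ▸ hcY.le_of_mem (hPQ'.subset (by simp)) a

theorem eq_of_isMeet (h : IsRotationSetMap I M0 RM) {M M' N Mu : Matching I}
    (hM : Stable I M) (hM' : Stable I M') (hN : IsMeet I M M' N) (hMu : Stable I Mu)
    (hRMu : RM Mu = RM M ∪ RM M') : N = Mu := by
  obtain ⟨hNs, hNM, hNM', hglb⟩ := hN
  have hMuM : Mu ≤ M := h.le_of_subset hM hMu (hRMu ▸ Set.subset_union_left)
  have hMuM' : Mu ≤ M' := h.le_of_subset hM' hMu (hRMu ▸ Set.subset_union_right)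
  refine le_antisymm (h.le_of_subset hMu hNs ?_) (hglb Mu hMu hMuM hMuM')
  exact hRMu ▸ Set.union_subset (h.antitone hM hNs hNM) (h.antitone hM' hNs hNM')

theorem eq_of_isJoin (h : IsRotationSetMap I M0 RM) {M M' N Md : Matching I}
    (hM : Stable I M) (hM' : Stable I M') (hN : IsJoin I M M' N) (hMd : Stable I Md)
    (hRMd : RM Md = RM M ∩ RM M') : N = Md := by
  obtain ⟨hNs, hMN, hM'N, hlub⟩ := hN
  have hMMd : M ≤ Md := h.le_of_subset hMd hM (hRMd ▸ Set.inter_subset_left)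
  have hM'Md : M' ≤ Md := h.le_of_subset hMd hM' (hRMd ▸ Set.inter_subset_right)
  refine le_antisymm (hlub Md hMd hMMd hM'Md) (h.le_of_subset hNs hMd ?_)
  exact hRMd ▸ Set.subset_inter (h.antitone hNs hM hMN) (h.antitone hNs hM' hM'N)

end IsRotationSetMap

theorem cutVal_union_add_inter_le (u : Vtx A B → Vtx A B → ℝ≥0∞) (S T : Set (Vtx A B)) :
    cutVal u (S ∪ T) + cutVal u (S ∩ T) ≤ cutVal u S + cutVal u T := by
  simp only [cutVal, ← Finset.sum_add_distrib]
  refine Finset.sum_le_sum fun p _ => ?_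
  by_cases h1 : p.1 ∈ S <;> by_cases h2 : p.1 ∈ T <;>
    by_cases h3 : p.2 ∈ S <;> by_cases h4 : p.2 ∈ T <;> simp [h1, h2, h3, h4]

namespace MinCutRepWith

variable [DecidableEq A] [DecidableEq B] {M0 : Matching I} {RM : Matching I → Set (Rot A B)}
  {F : Set (Matching I)} {f : Matching I → ℝ} {u : Vtx A B → Vtx A B → ℝ≥0∞} {C : ℝ}

theorem cutVal_ne_top (hu : MinCutRepWith I RM F f u C) (h : IsRotationSetMap I M0 RM)
    {M : Matching I} (hM : Stable I M) (hMF : M ∈ F) : cutVal u (cutOf (RM M)) ≠ ⊤ :=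
  (hu _ (h.subset_rotSet hM)).1.2 ⟨h.upperClosed hM, M, hM, rfl, hMF⟩

theorem toReal_cutVal (hu : MinCutRepWith I RM F f u C) (h : IsRotationSetMap I M0 RM)
    {M : Matching I} (hM : Stable I M) (hMF : M ∈ F) :
    (cutVal u (cutOf (RM M))).toReal = f M + C :=
  (hu _ (h.subset_rotSet hM)).2 M hM rfl hMF

theorem exists_of_cutVal_ne_top (hu : MinCutRepWith I RM F f u C) {R : Set (Rot A B)}
    (hR : R ⊆ RotSet I) (hfin : cutVal u (cutOf R) ≠ ⊤) :
    ∃ N ∈ F, Stable I N ∧ RM N = R :=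
  let ⟨_, N, hN, hRN, hNF⟩ := (hu R hR).1.1 hfin
  ⟨N, hNF, hN, hRN⟩

theorem exists_union_inter (hu : MinCutRepWith I RM F f u C) (h : IsRotationSetMap I M0 RM)
    {M M' : Matching I} (hM : Stable I M) (hM' : Stable I M') (hMF : M ∈ F) (hM'F : M' ∈ F) :
    ∃ Mu ∈ F, ∃ Md ∈ F, Stable I Mu ∧ Stable I Md ∧ RM Mu = RM M ∪ RM M' ∧
      RM Md = RM M ∩ RM M' ∧ f Mu + f Md ≤ f M + f M' := by
  have hsub := cutVal_union_add_inter_le u (cutOf (RM M)) (cutOf (RM M'))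
  rw [← cutOf_union, ← cutOf_inter] at hsub
  have hfin : cutVal u (cutOf (RM M)) + cutVal u (cutOf (RM M')) ≠ ⊤ :=
    ENNReal.add_ne_top.2 ⟨hu.cutVal_ne_top h hM hMF, hu.cutVal_ne_top h hM' hM'F⟩
  obtain ⟨hUfin, hIfin⟩ := ENNReal.add_ne_top.1 (ne_top_of_le_ne_top hfin hsub)
  obtain ⟨Mu, hMuF, hMu, hRMu⟩ := hu.exists_of_cutVal_ne_top
    (Set.union_subset (h.subset_rotSet hM) (h.subset_rotSet hM')) hUfin
  obtain ⟨Md, hMdF, hMd, hRMd⟩ := hu.exists_of_cutVal_ne_top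
    (Set.inter_subset_left.trans (h.subset_rotSet hM)) hIfin
  refine ⟨Mu, hMuF, Md, hMdF, hMu, hMd, hRMu, hRMd, ?_⟩
  have hreal := ENNReal.toReal_mono hfin hsub
  rw [ENNReal.toReal_add hUfin hIfin, ENNReal.toReal_add (hu.cutVal_ne_top h hM hMF)
    (hu.cutVal_ne_top h hM' hM'F), ← hRMu, ← hRMd, hu.toReal_cutVal h hMu hMuF,
    hu.toReal_cutVal h hMd hMdF, hu.toReal_cutVal h hM hMF, hu.toReal_cutVal h hM' hM'F] at hreal
  linarith

end MinCutRepWith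

end SM

namespace SM

variable {A B : Type} [Fintype A] [Fintype B] [DecidableEq A] [DecidableEq B]

/-- the minimizers of a minimum cut representable problem form a
sublattice of the lattice of stable matchings. -/
theorem stmt11 (I : SchoolInstance A B) (M0 : Matching I)
    (hM0 : Stable I M0 ∧ ∀ N, Stable I N → matGE I M0 N)
    (RM : Matching I → Set (Rot A B))
    (hRM : ∀ M c, Stable I M → chainTo I M0 M c → RM M = chainRots I c)
    (F : Set (Matching I)) (hFne : F.Nonempty) (hFS : ∀ M ∈ F, Stable I M)
    (f : Matching I → ℝ) (hMC : MinCutRep I RM F f) :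
    (∃ M ∈ F, ∀ M' ∈ F, f M ≤ f M') ∧
    (∀ M M' : Matching I, M ∈ F → M' ∈ F →
      (∀ P ∈ F, f M ≤ f P) → (∀ P ∈ F, f M' ≤ f P) →
      (∀ N, IsMeet I M M' N → N ∈ F ∧ ∀ P ∈ F, f N ≤ f P) ∧
      (∀ N, IsJoin I M M' N → N ∈ F ∧ ∀ P ∈ F, f N ≤ f P)) := by
  obtain ⟨u, C, hu⟩ := hMC
  have h : IsRotationSetMap I M0 RM := ⟨hM0.1, hM0.2, hRM⟩
  refine ⟨Set.exists_min_image F f F.toFinite hFne, fun M M' hMF hM'F hMmin hM'min => ?_⟩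
  have hM := hFS M hMF
  have hM' := hFS M' hM'F
  obtain ⟨Mu, hMuF, Md, hMdF, hMu, hMd, hRMu, hRMd, hsum⟩ :=
    hu.exists_union_inter h hM hM' hMF hM'F
  refine ⟨fun N hN => ?_, fun N hN => ?_⟩
  · rw [h.eq_of_isMeet hM hM' hN hMu hRMu]
    exact ⟨hMuF, fun P hP => by linarith [hM'min Md hMdF, hMmin P hP]⟩
  · rw [h.eq_of_isJoin hM hM' hN hMd hRMd]
    exact ⟨hMdF, fun P hP => by linarith [hMmin Mu hMuF, hM'min P hP]⟩

end SM
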